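/- Let Ω be a nonempty finite set, p a full-support probability vector on Ω, and n ≥ 1. For each ω ∈ Ω let G^ω : ℝ^n → ℝ be supermodular (G^ω(z ∨ z') + G^ω(z ∧ z') ≥ G^ω(z) + G^ω(z') for all z, z' ∈ ℝ^n, where ∨ and ∧ are the componentwise maximum and minimum) and symmetric under all permutations of its n arguments, let a^ω : Δ(Ω) → ℝ be a function, and suppose v^ω(x_1,…,x_n) := G^ω(a^ω(x_1),…,a^ω(x_n)) is bounded and upper semicontinuous on Δ(Ω)^n for every ω. Define v̄ : Δ(Ω) → ℝ by v̄(x) = ∑_{ω∈Ω} x(ω)·G^ω(a^ω(x),…,a^ω(x)). Then the value Val of the persuasion problem with utilities (v^ω) equals the supremum of ∫ v̄ dλ over λ ∈ Δ_p(Δ(Ω)), and this common value is attained by a feasible collection (μ^ω)_{ω∈Ω} in which each μ^ω is supported on the diagonal {(x,…,x) : x ∈ Δ(Ω)} and the corresponding unconditional distribution ∑_{ω} p(ω)·μ^ω is the image on the diagonal of a measure λ ∈ Δ_p(Δ(Ω)) supported on at most |Ω| points. -/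

import Mathlib

open MeasureTheory

noncomputable section

abbrev Belief (Ω : Type) [Fintype Ω] : Type := stdSimplex ℝ Ω

variable {Ω : Type} [Fintype Ω] [MeasurableSpace Ω] [MeasurableSingletonClass Ω]

/-- The joint distribution of state and beliefs. -/
def jointP (p : Ω → ℝ) {X : Type} [MeasurableSpace X] (μ : Ω → Measure X) :
    Measure (Ω × X) :=
  ∑ ω : Ω, ENNReal.ofReal (p ω) • ((Measure.dirac ω).prod (μ ω))

/-- Feasibility of a collection of conditional belief distributions, n receivers. -/
def Feasible (p : Ω → ℝ) (n : ℕ) (μ : Ω → Measure (Fin n → Belief Ω)) : Prop :=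
  (∀ ω, IsProbabilityMeasure (μ ω)) ∧
  ∀ (i : Fin n) (ω' : Ω),
    (fun z : Ω × (Fin n → Belief Ω) => (z.2 i).1 ω')
      =ᵐ[jointP p μ]
      (jointP p μ)[Set.indicator {z : Ω × (Fin n → Belief Ω) | z.1 = ω'} (fun _ => (1 : ℝ)) |
        MeasurableSpace.comap (fun z : Ω × (Fin n → Belief Ω) => z.2 i) inferInstance]

/-- Feasibility of a collection of conditional belief distributions, single receiver. -/
def Feasible1 (p : Ω → ℝ) (lam : Ω → Measure (Belief Ω)) : Prop :=
  (∀ ω, IsProbabilityMeasure (lam ω)) ∧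
  ∀ ω' : Ω,
    (fun z : Ω × Belief Ω => (z.2).1 ω')
      =ᵐ[jointP p lam]
      (jointP p lam)[Set.indicator {z : Ω × Belief Ω | z.1 = ω'} (fun _ => (1 : ℝ)) |
        MeasurableSpace.comap (fun z : Ω × Belief Ω => z.2) inferInstance]

/-- the value of the persuasion problem -/
def Val (p : Ω → ℝ) (n : ℕ) (v : Ω → (Fin n → Belief Ω) → ℝ) : ℝ :=
  sSup { r | ∃ μ : Ω → Measure (Fin n → Belief Ω),
    Feasible p n μ ∧ r = ∑ ω : Ω, p ω * ∫ x, v ω x ∂(μ ω) }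

end


set_option maxHeartbeats 1000000

section SortLemma

variable {α : Type*} [Lattice α]

/-- insertion with lattice comparators -/
def insC (a : α) : List α → List α
  | [] => [a]
  | b :: l => (a ⊓ b) :: insC (a ⊔ b) l

/-- sorting with lattice comparators -/
def sortC : List α → List α
  | [] => []
  | a :: l => insC a (sortC l)

lemma insC_le {y : α} : ∀ {l : List α} {a : α}, y ≤ a → (∀ b ∈ l, y ≤ b) →
    ∀ x ∈ insC a l, y ≤ x
  | [], a, ha, _, x, hx => by
      simp only [insC, List.mem_singleton] at hx; subst hx; exact ha
  | b :: l, a, ha, hl, x, hx => by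
      simp only [insC, List.mem_cons] at hx
      rcases hx with rfl | hx
      · exact le_inf ha (hl b (List.mem_cons_self))
      · exact insC_le (ha.trans le_sup_left)
          (fun c hc => hl c (List.mem_cons_of_mem _ hc)) x hx

lemma insC_sorted : ∀ {l : List α} {a : α}, l.Pairwise (· ≤ ·) → (insC a l).Pairwise (· ≤ ·)
  | [], a, _ => by simp [insC]
  | b :: l, a, h => by
      rw [List.pairwise_cons] at h
      simp only [insC, List.pairwise_cons]
      refine ⟨?_, insC_sorted h.2⟩
      intro x hx
      exact insC_le (inf_le_left.trans le_sup_left)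
        (fun c hc => inf_le_right.trans (h.1 c hc)) x hx

lemma sortC_sorted : ∀ (l : List α), (sortC l).Pairwise (· ≤ ·)
  | [] => by simp [sortC]
  | a :: l => insC_sorted (sortC_sorted l)

variable (G : α → ℝ)

lemma insC_sumG (hsuper : ∀ z z', G z + G z' ≤ G (z ⊔ z') + G (z ⊓ z')) :
    ∀ (l : List α) (a : α), G a + (l.map G).sum ≤ ((insC a l).map G).sum
  | [], a => by simp [insC]
  | b :: l, a => by
      simp only [insC, List.map_cons, List.sum_cons]
      have h1 := insC_sumG hsuper l (a ⊔ b)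
      have h2 := hsuper a b
      linarith

lemma sortC_sumG (hsuper : ∀ z z', G z + G z' ≤ G (z ⊔ z') + G (z ⊓ z')) :
    ∀ (l : List α), (l.map G).sum ≤ ((sortC l).map G).sum
  | [] => le_refl _
  | a :: l => by
      simp only [sortC, List.map_cons, List.sum_cons]
      calc G a + (l.map G).sum ≤ G a + ((sortC l).map G).sum := by
            have := sortC_sumG hsuper l; linarith
        _ ≤ _ := insC_sumG G hsuper (sortC l) a

variable {β : Type*} [LinearOrder β] {f : α → β}

lemma insC_perm (hinf : ∀ a b : α, f (a ⊓ b) = f a ⊓ f b) (hsup : ∀ a b : α, f (a ⊔ b) = f a ⊔ f b) :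
    ∀ (l : List α) (a : α), ((insC a l).map f).Perm ((a :: l).map f)
  | [], a => by simp [insC]
  | b :: l, a => by
      simp only [insC, List.map_cons]
      refine List.Perm.trans (List.Perm.cons _ (insC_perm hinf hsup l (a ⊔ b))) ?_
      simp only [List.map_cons]
      rw [hinf, hsup]
      rcases le_total (f a) (f b) with h | h
      · rw [inf_eq_left.mpr h, sup_eq_right.mpr h]
      · rw [inf_eq_right.mpr h, sup_eq_left.mpr h]
        exact List.Perm.swap _ _ _

lemma sortC_perm (hinf : ∀ a b : α, f (a ⊓ b) = f a ⊓ f b)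
    (hsup : ∀ a b : α, f (a ⊔ b) = f a ⊔ f b) :
    ∀ (l : List α), ((sortC l).map f).Perm (l.map f)
  | [] => by simp [sortC]
  | a :: l => by
      simp only [sortC]
      refine List.Perm.trans (insC_perm hinf hsup (sortC l) a) ?_
      simp only [List.map_cons]
      exact List.Perm.cons _ (sortC_perm hinf hsup l)

end SortLemma

lemma eq_const_of_maps_eq {n : ℕ} {i0 : Fin n} :
    ∀ {l : List (Fin n → ℝ)}, (∀ i, l.map (· i) = l.map (· i0)) →
      ∀ w ∈ l, w = fun _ => w i0
  | [], _, w, hw => absurd hw (List.not_mem_nil)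
  | a :: l, h, w, hw => by
      have hhead : ∀ i, a i = a i0 := fun i => by
        have := h i; simp only [List.map_cons, List.cons.injEq] at this; exact this.1
      have htail : ∀ i, l.map (· i) = l.map (· i0) := fun i => by
        have := h i; simp only [List.map_cons, List.cons.injEq] at this; exact this.2
      rcases List.mem_cons.mp hw with rfl | hw
      · exact funext fun i => hhead i
      · exact eq_const_of_maps_eq htail w hw

lemma map_perm_equiv {n : ℕ} {β : Type*} (f : Fin n → β) (e : Equiv.Perm (Fin n)) :
    ((List.finRange n).map (f ∘ e)).Perm ((List.finRange n).map f) := by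
  have h1 : (List.finRange n).map (f ∘ e) = ((List.finRange n).map e).map f := by
    simp [List.map_map, Function.comp]
  rw [h1]
  refine List.Perm.map f ?_
  apply List.perm_of_nodup_nodup_toFinset_eq ((List.nodup_finRange n).map e.injective)
    (List.nodup_finRange n)
  ext x
  simp only [List.mem_toFinset, List.mem_map, List.mem_finRange, true_and, iff_true]
  exact ⟨e.symm x, e.apply_symm_apply x⟩

/-- For a symmetric supermodular function, the diagonal dominates:
`n * G z ≤ ∑ i, G (z i, ..., z i)`. -/
lemma supermod_diag {n : ℕ} (hn : 1 ≤ n) (G : (Fin n → ℝ) → ℝ)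
    (hsuper : ∀ z z', G z + G z' ≤ G (z ⊔ z') + G (z ⊓ z'))
    (hsymm : ∀ (σ : Equiv.Perm (Fin n)) (z : Fin n → ℝ), G (z ∘ σ) = G z)
    (z : Fin n → ℝ) :
    (n : ℝ) * G z ≤ ∑ i, G (fun _ => z i) := by
  haveI : NeZero n := ⟨(Nat.pos_of_ne_zero (by omega)).ne'⟩
  set i0 : Fin n := ⟨0, hn⟩ with hi0
  set L0 : List (Fin n → ℝ) :=
    (List.finRange n).map (fun k => z ∘ (Equiv.addLeft k : Equiv.Perm (Fin n))) with hL0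
  set u : List (Fin n → ℝ) := sortC L0 with hu
  -- sum over L0 equals n * G z
  have hsum0 : (L0.map G).sum = (n : ℝ) * G z := by
    rw [hL0, List.map_map]
    have : (G ∘ fun k => z ∘ (Equiv.addLeft k : Equiv.Perm (Fin n))) =
        fun _ => G z := by
      funext k; exact hsymm _ z
    rw [this, List.map_const', List.sum_replicate, List.length_finRange, nsmul_eq_mul]
  -- coordinate lists of L0 are permutations of the list of values of z
  have hL0coord : ∀ i : Fin n, (L0.map (· i)).Perm ((List.finRange n).map z) := by
    intro i
    rw [hL0, List.map_map]
    have : ((· i) ∘ fun k => z ∘ (Equiv.addLeft k : Equiv.Perm (Fin n))) =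
        z ∘ (Equiv.addRight i : Equiv.Perm (Fin n)) := by
      funext k; simp [Equiv.addLeft, Equiv.addRight, Function.comp]
    rw [this]
    exact map_perm_equiv z _
  have hinf : ∀ (a b : Fin n → ℝ) (i : Fin n), (a ⊓ b) i = a i ⊓ b i := fun _ _ _ => rfl
  have hcoordperm : ∀ i : Fin n, (u.map (· i)).Perm ((List.finRange n).map z) := by
    intro i
    exact (sortC_perm (f := (· i)) (fun a b => rfl) (fun a b => rfl) L0).trans (hL0coord i)
  -- all coordinate lists of u are equal
  have hsorted : ∀ i : Fin n, (u.map (· i)).Pairwise (· ≤ ·) := by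
    intro i
    exact List.Pairwise.map _ (fun a b hab => hab i) (sortC_sorted L0)
  have hmaps : ∀ i : Fin n, u.map (· i) = u.map (· i0) := by
    intro i
    exact List.Perm.eq_of_pairwise' (hsorted i) (hsorted i0)
      ((hcoordperm i).trans (hcoordperm i0).symm)
  have hconst := eq_const_of_maps_eq hmaps
  -- final computation
  have h1 : (L0.map G).sum ≤ (u.map G).sum := sortC_sumG G hsuper L0
  have h2 : u.map G = (u.map (· i0)).map (fun t => G (fun _ => t)) := by
    rw [List.map_map]
    refine List.map_congr_left ?_
    intro w hw
    rw [hconst w hw]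
    rfl
  have h3 : ((u.map (· i0)).map (fun t => G (fun _ => t))).sum =
      (((List.finRange n).map z).map (fun t => G (fun _ => t))).sum :=
    List.Perm.sum_eq (List.Perm.map _ (hcoordperm i0))
  have h4 : (((List.finRange n).map z).map (fun t => G (fun _ => t))).sum =
      ∑ i, G (fun _ => z i) := by
    rw [List.map_map, Fin.sum_univ_def]
    rfl
  rw [hsum0, h2, h3, h4] at h1
  exact h1




lemma caratheodory_weights {Ω : Type} [Fintype Ω] (W : Belief Ω → ℝ) (p : Ω → ℝ) :
    ∀ (k : ℕ) (s : Finset (Belief Ω)) (q : Belief Ω → ℝ), s.card ≤ k →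
    (∀ x ∈ s, 0 ≤ q x) → (∑ x ∈ s, q x = 1) → (∀ ω, ∑ x ∈ s, q x * x.1 ω = p ω) →
    ∃ (s' : Finset (Belief Ω)) (q' : Belief Ω → ℝ),
      (∀ x ∈ s', 0 ≤ q' x) ∧ (∑ x ∈ s', q' x = 1) ∧ (∀ ω, ∑ x ∈ s', q' x * x.1 ω = p ω) ∧
      s'.card ≤ Fintype.card Ω ∧ (∑ x ∈ s, q x * W x) ≤ ∑ x ∈ s', q' x * W x := by
  intro k
  induction k with
  | zero =>
      intro s q hcard hq0 hq1 hqb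
      exact ⟨s, q, hq0, hq1, hqb, le_trans hcard (Nat.zero_le _), le_refl _⟩
  | succ k ih =>
      intro s q hcard hq0 hq1 hqb
      by_cases hbig : s.card ≤ Fintype.card Ω
      · exact ⟨s, q, hq0, hq1, hqb, hbig, le_refl _⟩
      push_neg at hbig
      -- find a nontrivial relation
      have hinj : Set.InjOn (Subtype.val) (s : Set (Belief Ω)) :=
        fun x _ y _ h => Subtype.val_injective h
      have hcardt : Module.finrank ℝ (Ω → ℝ) < (s.image Subtype.val).card := by
        rw [Finset.card_image_of_injOn hinj, Module.finrank_pi]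
        exact hbig
      obtain ⟨f, hfrel, x1v, hx1vmem, hx1vne⟩ :=
        Module.exists_nontrivial_relation_of_finrank_lt_card hcardt
      -- transfer to Belief Ω
      have hrel0 : ∀ ω, ∑ x ∈ s, f x.1 * x.1 ω = 0 := by
        intro ω
        have h1 : ∑ e ∈ s.image Subtype.val, f e • e = 0 := hfrel
        rw [Finset.sum_image hinj] at h1
        have := congrFun h1 ω
        simpa [Finset.sum_apply] using this
      obtain ⟨x1, hx1s, hx1eq⟩ := Finset.mem_image.mp hx1vmem
      -- get d with nonneg value direction
      obtain ⟨d, hdrel, hdne, hdW⟩ :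
          ∃ d : Belief Ω → ℝ, (∀ ω, ∑ x ∈ s, d x * x.1 ω = 0) ∧
            (∃ x ∈ s, d x ≠ 0) ∧ 0 ≤ ∑ x ∈ s, d x * W x := by
        rcases le_total 0 (∑ x ∈ s, (f x.1) * W x) with h | h
        · exact ⟨fun x => f x.1, hrel0, ⟨x1, hx1s, by simpa [hx1eq] using hx1vne⟩, h⟩
        · refine ⟨fun x => -f x.1, fun ω => ?_, ⟨x1, hx1s, by simpa [hx1eq] using hx1vne⟩, ?_⟩
          · simp only [neg_mul, Finset.sum_neg_distrib]
            rw [hrel0 ω]; ring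
          · simp only [neg_mul, Finset.sum_neg_distrib]
            linarith
      obtain ⟨xne, hxnes, hxnene⟩ := hdne
      have hdsum : ∑ x ∈ s, d x = 0 := by
        have h1 : ∀ x ∈ s, d x = ∑ ω, d x * x.1 ω := by
          intro x hx
          rw [← Finset.mul_sum, x.2.2, mul_one]
        rw [Finset.sum_congr rfl h1, Finset.sum_comm]
        simp [hdrel]
      -- negative part nonempty
      have hneg : (s.filter (fun x => d x < 0)).Nonempty := by
        by_contra hcon
        rw [Finset.not_nonempty_iff_eq_empty, Finset.filter_eq_empty_iff] at hcon
        push_neg at hcon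
        have : ∀ x ∈ s, d x = 0 := by
          intro x hx
          have := (Finset.sum_eq_zero_iff_of_nonneg hcon).mp hdsum
          exact this x hx
        exact hxnene (this xne hxnes)
      obtain ⟨x0, hx0mem, hx0min⟩ :=
        Finset.exists_min_image (s.filter (fun x => d x < 0)) (fun x => q x / (-d x)) hneg
      have hx0s : x0 ∈ s := (Finset.mem_filter.mp hx0mem).1
      have hx0d : d x0 < 0 := (Finset.mem_filter.mp hx0mem).2
      set ε : ℝ := q x0 / (-d x0) with hε
      have hεnn : 0 ≤ ε := div_nonneg (hq0 x0 hx0s) (by linarith)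
      set q' : Belief Ω → ℝ := fun x => q x + ε * d x with hq'
      have hq'0 : ∀ x ∈ s, 0 ≤ q' x := by
        intro x hx
        rcases le_or_gt 0 (d x) with h | h
        · exact add_nonneg (hq0 x hx) (mul_nonneg hεnn h)
        · have hxf : x ∈ s.filter (fun x => d x < 0) := Finset.mem_filter.mpr ⟨hx, h⟩
          have := hx0min x hxf
          have h2 : ε * (-d x) ≤ q x := by
            rw [← le_div_iff₀ (by linarith : (0:ℝ) < -d x)]
            exact this.trans' (le_refl _) |>.trans (le_refl _) |>.trans (le_refl _)
          simp only [hq']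
          nlinarith
      have hq'x0 : q' x0 = 0 := by
        simp only [hq', hε]
        have hne : -d x0 ≠ 0 := by linarith
        field_simp
        rw [div_self (by linarith : d x0 ≠ 0)]; ring
      -- transfer sums from s to s.erase x0
      have htrans : ∀ g : Belief Ω → ℝ, ∑ x ∈ s.erase x0, q' x * g x = ∑ x ∈ s, q' x * g x := by
        intro g
        rw [← Finset.sum_erase_add s _ hx0s, hq'x0, zero_mul, add_zero]
      have hs'card : (s.erase x0).card ≤ k := by
        have := Finset.card_erase_of_mem hx0s
        omega
      have hq'1 : ∑ x ∈ s.erase x0, q' x = 1 := by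
        have : ∑ x ∈ s.erase x0, q' x = ∑ x ∈ s, q' x := by
          rw [← Finset.sum_erase_add s _ hx0s, hq'x0, add_zero]
        rw [this]
        simp only [hq']
        rw [Finset.sum_add_distrib, hq1, ← Finset.mul_sum, hdsum, mul_zero, add_zero]
      have hq'b : ∀ ω, ∑ x ∈ s.erase x0, q' x * x.1 ω = p ω := by
        intro ω
        rw [htrans]
        simp only [hq', add_mul]
        rw [Finset.sum_add_distrib, hqb ω]
        have : ∑ x ∈ s, ε * d x * x.1 ω = ε * ∑ x ∈ s, d x * x.1 ω := by
          rw [Finset.mul_sum]; congr 1; funext x; ring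
        rw [this, hdrel ω, mul_zero, add_zero]
      have hq'W : ∑ x ∈ s, q x * W x ≤ ∑ x ∈ s.erase x0, q' x * W x := by
        rw [htrans]
        simp only [hq', add_mul]
        rw [Finset.sum_add_distrib]
        have : ∑ x ∈ s, ε * d x * W x = ε * ∑ x ∈ s, d x * W x := by
          rw [Finset.mul_sum]; congr 1; funext x; ring
        rw [this]
        nlinarith
      obtain ⟨s'', q'', h0, h1, hb, hc, hW⟩ :=
        ih (s.erase x0) q' hs'card (fun x hx => hq'0 x (Finset.mem_of_mem_erase hx)) hq'1 hq'b
      exact ⟨s'', q'', h0, h1, hb, hc, hq'W.trans hW⟩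


lemma isCompact_convexHull' {V : Type*} [NormedAddCommGroup V] [NormedSpace ℝ V]
    [FiniteDimensional ℝ V] {H : Set V} (hH : IsCompact H) :
    IsCompact (convexHull ℝ H) := by
  rcases H.eq_empty_or_nonempty with rfl | ⟨x0, hx0⟩
  · simp [convexHull_empty]
  set N : ℕ := Module.finrank ℝ V + 1 with hN
  set A : Set ((Fin N → ℝ) × (Fin N → V)) :=
    (stdSimplex ℝ (Fin N)) ×ˢ (Set.univ.pi fun _ => H) with hA
  have hAcomp : IsCompact A := (isCompact_stdSimplex _ _).prod (isCompact_univ_pi fun _ => hH)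
  set F : (Fin N → ℝ) × (Fin N → V) → V := fun wx => ∑ j, wx.1 j • wx.2 j with hF
  have hFcont : Continuous F := by
    apply continuous_finset_sum
    intro j _
    exact ((continuous_apply j).comp continuous_fst).smul
      ((continuous_apply j).comp continuous_snd)
  have himage : F '' A = convexHull ℝ H := by
    apply Set.Subset.antisymm
    · rintro x ⟨⟨w, zz⟩, ⟨hw, hz⟩, rfl⟩
      exact Convex.sum_mem (convex_convexHull ℝ H) (fun j _ => hw.1 j) hw.2
        (fun j _ => subset_convexHull ℝ H (hz j (Set.mem_univ j)))
    · intro x hx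
      obtain ⟨ι, hfin, z, w, hrange, haff, hwpos, hwsum, hwx⟩ :=
        eq_pos_convex_span_of_mem_convexHull hx
      letI : Fintype ι := hfin
      haveI : Nonempty ι := by
        by_contra hcon
        rw [not_nonempty_iff] at hcon
        rw [Finset.univ_eq_empty, Finset.sum_empty] at hwsum
        exact one_ne_zero hwsum.symm
      have hcard : Fintype.card ι ≤ N := by
        have h1 := haff.finrank_vectorSpan_add_one
        have h2 := Submodule.finrank_le (vectorSpan ℝ (Set.range z))
        omega
      obtain ⟨e⟩ : Nonempty (ι ↪ Fin N) := by
        rw [Function.Embedding.nonempty_iff_card_le, Fintype.card_fin]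
        exact hcard
      classical
      set w' : Fin N → ℝ := fun j => if h : ∃ i, e i = j then w h.choose else 0 with hw'
      set z' : Fin N → V := fun j => if h : ∃ i, e i = j then z h.choose else x0 with hz'
      have hchoose : ∀ i : ι, (⟨i, rfl⟩ : ∃ i', e i' = e i).choose = i := by
        intro i
        exact e.injective (⟨i, rfl⟩ : ∃ i', e i' = e i).choose_spec
      have hw'e : ∀ i : ι, w' (e i) = w i := by
        intro i
        simp only [hw', dif_pos (⟨i, rfl⟩ : ∃ i', e i' = e i)]
        rw [hchoose i]
      have hz'e : ∀ i : ι, z' (e i) = z i := by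
        intro i
        simp only [hz', dif_pos (⟨i, rfl⟩ : ∃ i', e i' = e i)]
        rw [hchoose i]
      have hsum_img : ∀ g : Fin N → V, (∀ j, ¬(∃ i, e i = j) → g j = 0) →
          ∑ j, g j = ∑ i, g (e i) := by
        intro g hg
        rw [← Finset.sum_image (fun a _ b _ h => e.injective h)]
        refine (Finset.sum_subset (Finset.subset_univ _) ?_).symm
        intro j _ hj
        refine hg j ?_
        intro ⟨i, hi⟩
        exact hj (Finset.mem_image.mpr ⟨i, Finset.mem_univ i, hi⟩)
      have hsum_imgR : ∀ g : Fin N → ℝ, (∀ j, ¬(∃ i, e i = j) → g j = 0) →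
          ∑ j, g j = ∑ i, g (e i) := by
        intro g hg
        rw [← Finset.sum_image (fun a _ b _ h => e.injective h)]
        refine (Finset.sum_subset (Finset.subset_univ _) ?_).symm
        intro j _ hj
        refine hg j ?_
        intro ⟨i, hi⟩
        exact hj (Finset.mem_image.mpr ⟨i, Finset.mem_univ i, hi⟩)
      refine ⟨(w', z'), ⟨⟨fun j => ?_, ?_⟩, fun j _ => ?_⟩, ?_⟩
      · simp only [hw']
        split
        · exact le_of_lt (hwpos _)
        · exact le_refl 0
      · rw [hsum_imgR w' (fun j hj => by simp only [hw', dif_neg hj])]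
        rw [Finset.sum_congr rfl (fun i _ => hw'e i)]
        exact hwsum
      · simp only [hz']
        split
        · exact hrange (Set.mem_range_self _)
        · exact hx0
      · simp only [hF]
        rw [hsum_img (fun j => w' j • z' j)
          (fun j hj => by simp only [hw', dif_neg hj, zero_smul])]
        rw [Finset.sum_congr rfl (fun i _ => by rw [hw'e i, hz'e i])]
        exact hwx
  rw [← himage]
  exact hAcomp.image hFcont

open MeasureTheory

section USCHelpers

variable {X : Type*} [TopologicalSpace X]

lemma usc_comp_continuous {Y : Type*} [TopologicalSpace Y] {g : Y → ℝ}
    (hg : UpperSemicontinuous g) {f : X → Y} (hf : Continuous f) :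
    UpperSemicontinuous (fun x => g (f x)) := by
  rw [upperSemicontinuous_iff_isOpen_preimage] at hg ⊢
  intro y
  exact (hg y).preimage hf

lemma usc_mul_nonneg {f g : X → ℝ} (hf : Continuous f) (hg : UpperSemicontinuous g)
    (hf0 : ∀ x, 0 ≤ f x) (hg0 : ∀ x, 0 ≤ g x) :
    UpperSemicontinuous (fun x => f x * g x) := by
  intro x0 c hc
  obtain ⟨ε, hεmem, hε⟩ : ∃ ε ∈ Set.Ioi (0:ℝ), (f x0 + ε) * (g x0 + ε) < c := by
    have hcont : Filter.Tendsto (fun ε : ℝ => (f x0 + ε) * (g x0 + ε)) (nhds 0)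
        (nhds (f x0 * g x0)) := by
      have : Filter.Tendsto (fun ε : ℝ => (f x0 + ε) * (g x0 + ε)) (nhds 0)
          (nhds ((f x0 + 0) * (g x0 + 0))) := by
        exact Filter.Tendsto.mul (tendsto_const_nhds.add Filter.tendsto_id)
          (tendsto_const_nhds.add Filter.tendsto_id)
      simpa using this
    have hev : ∀ᶠ ε in nhds (0:ℝ), (f x0 + ε) * (g x0 + ε) < c :=
      hcont.eventually_lt_const hc
    have hev2 : ∀ᶠ ε in nhdsWithin (0:ℝ) (Set.Ioi 0), (f x0 + ε) * (g x0 + ε) < c :=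
      hev.filter_mono nhdsWithin_le_nhds
    exact (hev2.and self_mem_nhdsWithin).exists.imp (fun ε h => ⟨h.2, h.1⟩)
  have hεpos : 0 < ε := hεmem
  have hf' : ∀ᶠ x in nhds x0, f x < f x0 + ε :=
    (hf.tendsto x0).eventually_lt_const (by linarith)
  have hg' : ∀ᶠ x in nhds x0, g x < g x0 + ε := hg x0 (g x0 + ε) (by linarith)
  filter_upwards [hf', hg'] with x h1 h2
  calc f x * g x < (f x0 + ε) * (g x0 + ε) := mul_lt_mul'' h1 h2 (hf0 x) (hg0 x)
    _ < c := hε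

lemma usc_finset_sum {ι : Type*} (s : Finset ι) (f : ι → X → ℝ)
    (hf : ∀ i ∈ s, UpperSemicontinuous (f i)) :
    UpperSemicontinuous (fun x => ∑ i ∈ s, f i x) := by
  classical
  induction s using Finset.induction_on with
  | empty =>
      have h0 : UpperSemicontinuous (fun _ : X => (0:ℝ)) := upperSemicontinuous_const
      simp only [Finset.sum_empty]
      exact h0
  | @insert a s hnotmem ih =>
      simp only [Finset.sum_insert hnotmem]
      exact (hf a (Finset.mem_insert_self a s)).add
        (ih (fun i hi => hf i (Finset.mem_insert_of_mem hi)))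


lemma usc_measurable {X : Type*} [TopologicalSpace X] [MeasurableSpace X] [OpensMeasurableSpace X] {f : X → ℝ}
    (hf : UpperSemicontinuous f) : Measurable f := by
  apply measurable_of_Iio
  intro c
  exact ((upperSemicontinuous_iff_isOpen_preimage.mp hf) c).measurableSet


end USCHelpers

open MeasureTheory ENNReal NNReal
set_option linter.unusedSectionVars false

section Helpers
variable {X : Type*} [MeasurableSpace X]

lemma integrable_of_bounded'' {μ : Measure X} [IsFiniteMeasure μ]
    {f : X → ℝ} (hm : AEStronglyMeasurable f μ) {C : ℝ} (h : ∀ x, |f x| ≤ C) :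
    Integrable f μ :=
  ⟨hm, HasFiniteIntegral.of_bounded (C := C) (Filter.Eventually.of_forall h)⟩

lemma indicator_abs_le {s : Set X} {f : X → ℝ} {C : ℝ} (hC : 0 ≤ C) (h : ∀ x, |f x| ≤ C) :
    ∀ x, |Set.indicator s f x| ≤ C := by
  intro x
  by_cases hx : x ∈ s
  · rw [Set.indicator_of_mem hx]; exact h x
  · rw [Set.indicator_of_notMem hx]; simpa using hC

lemma withDensity_finset_sum (μ : Measure X) {ι : Type*} (s : Finset ι)
    (f : ι → X → ℝ≥0∞) (hf : ∀ i, Measurable (f i)) :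
    μ.withDensity (fun x => ∑ i ∈ s, f i x) = ∑ i ∈ s, μ.withDensity (f i) := by
  classical
  induction s using Finset.induction_on with
  | empty => simp
  | @insert a s hnotmem ih =>
      have h1 : (fun x => ∑ i ∈ insert a s, f i x)
          = f a + fun x => ∑ i ∈ s, f i x := by
        funext x; rw [Finset.sum_insert hnotmem]; rfl
      rw [h1, withDensity_add_left (hf a), ih, Finset.sum_insert hnotmem]

end Helpers

section JointP
variable {Ω : Type} [Fintype Ω] [MeasurableSpace Ω] [MeasurableSingletonClass Ω]

lemma jointP_isProbability (p : Ω → ℝ) (hp0 : ∀ ω, 0 ≤ p ω) (hpsum : ∑ ω : Ω, p ω = 1)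
    {X : Type} [MeasurableSpace X] (μ : Ω → Measure X) (hμ : ∀ ω, IsProbabilityMeasure (μ ω)) :
    IsProbabilityMeasure (jointP p μ) := by
  constructor
  rw [jointP, Measure.finset_sum_apply]
  have h1 : ∀ ω : Ω, (ENNReal.ofReal (p ω) • ((Measure.dirac ω).prod (μ ω))) Set.univ
      = ENNReal.ofReal (p ω) := by
    intro ω
    haveI := hμ ω
    rw [Measure.smul_apply, measure_univ, smul_eq_mul, mul_one]
  rw [Finset.sum_congr rfl (fun ω _ => h1 ω),
    ← ENNReal.ofReal_sum_of_nonneg (fun ω _ => hp0 ω), hpsum, ENNReal.ofReal_one]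

lemma integral_jointP (p : Ω → ℝ) (hp0 : ∀ ω, 0 ≤ p ω)
    {X : Type} [MeasurableSpace X] (μ : Ω → Measure X) (hμ : ∀ ω, IsProbabilityMeasure (μ ω))
    {f : Ω × X → ℝ} (hfm : Measurable f) {C : ℝ} (hfb : ∀ z, |f z| ≤ C) :
    ∫ z, f z ∂(jointP p μ) = ∑ ω : Ω, p ω * ∫ x, f (ω, x) ∂(μ ω) := by
  haveI := fun ω => hμ ω
  rw [jointP, integral_finset_sum_measure (fun ω _ => Integrable.smul_measure
    (integrable_of_bounded'' hfm.aestronglyMeasurable hfb) ENNReal.ofReal_ne_top)]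
  refine Finset.sum_congr rfl (fun ω _ => ?_)
  rw [integral_smul_measure, Measure.dirac_prod,
    integral_map measurable_prodMk_left.aemeasurable hfm.aestronglyMeasurable,
    ENNReal.toReal_ofReal (hp0 ω), smul_eq_mul]

lemma jointP_fst_apply (p : Ω → ℝ)
    {X : Type} [MeasurableSpace X] (μ : Ω → Measure X) (hμ : ∀ ω, IsProbabilityMeasure (μ ω))
    (ω' : Ω) : jointP p μ {z : Ω × X | z.1 = ω'} = ENNReal.ofReal (p ω') := by
  classical
  haveI := fun ω => hμ ω
  have hset : {z : Ω × X | z.1 = ω'} = ({ω'} : Set Ω) ×ˢ (Set.univ : Set X) := by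
    ext z
    simp only [Set.mem_setOf_eq, Set.mem_prod, Set.mem_singleton_iff, Set.mem_univ, and_true]
  rw [jointP, Measure.finset_sum_apply, hset]
  have h1 : ∀ ω : Ω, (ENNReal.ofReal (p ω) • ((Measure.dirac ω).prod (μ ω)))
      (({ω'} : Set Ω) ×ˢ (Set.univ : Set X)) = if ω = ω' then ENNReal.ofReal (p ω) else 0 := by
    intro ω
    rw [Measure.smul_apply, Measure.prod_prod, measure_univ, mul_one,
      Measure.dirac_apply' _ (measurableSet_singleton ω')]
    by_cases h : ω = ω'
    · simp [h]
    · simp [Set.indicator_apply, h]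
  rw [Finset.sum_congr rfl (fun ω _ => h1 ω), Finset.sum_ite_eq' Finset.univ ω'
    (fun ω => ENNReal.ofReal (p ω))]
  simp

end JointP

section StepA
variable {Ω : Type} [Fintype Ω] [Nonempty Ω] [MeasurableSpace Ω] [MeasurableSingletonClass Ω]

lemma belief_coord_le_one (x : Belief Ω) (ω : Ω) : x.1 ω ≤ 1 := by
  have h := Finset.single_le_sum (f := x.1) (fun i _ => x.2.1 i) (Finset.mem_univ ω)
  rw [x.2.2] at h
  exact h

lemma belief_coord_abs_le_one (x : Belief Ω) (ω : Ω) : |x.1 ω| ≤ 1 := by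
  rw [abs_of_nonneg (x.2.1 ω)]
  exact belief_coord_le_one x ω

lemma integral_withDensity_belief (p : Ω → ℝ) (hp : ∀ ω, 0 < p ω)
    (lam : Measure (Belief Ω)) [IsFiniteMeasure lam] (ω : Ω)
    {h : Belief Ω → ℝ} (hm : Measurable h) :
    p ω * ∫ b, h b ∂(lam.withDensity (fun x => ENNReal.ofReal (x.1 ω / p ω)))
      = ∫ b, b.1 ω * h b ∂lam := by
  have hρm : Measurable (fun x : Belief Ω => Real.toNNReal (x.1 ω / p ω)) :=
    (((continuous_apply ω).comp continuous_subtype_val).measurable.div_const _).real_toNNReal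
  have heq : (fun x : Belief Ω => ENNReal.ofReal (x.1 ω / p ω))
      = fun x => ((Real.toNNReal (x.1 ω / p ω) : ℝ≥0) : ℝ≥0∞) := rfl
  rw [heq, integral_withDensity_eq_integral_smul hρm, ← integral_const_mul]
  congr 1; funext b
  have h0 : 0 ≤ b.1 ω / p ω := div_nonneg (b.2.1 ω) (le_of_lt (hp ω))
  rw [NNReal.smul_def, Real.coe_toNNReal _ h0]
  field_simp
  rw [smul_eq_mul, ← mul_assoc, mul_div_assoc', mul_div_cancel_left₀ _ (ne_of_gt (hp ω))]

lemma lamd_isProbability (p : Ω → ℝ) (hp : ∀ ω, 0 < p ω)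
    (lam : Measure (Belief Ω)) [IsProbabilityMeasure lam]
    (hbary : ∀ ω : Ω, ∫ x : Belief Ω, x.1 ω ∂lam = p ω) (ω : Ω) :
    IsProbabilityMeasure (lam.withDensity (fun x => ENNReal.ofReal (x.1 ω / p ω))) := by
  constructor
  rw [withDensity_apply _ MeasurableSet.univ, Measure.restrict_univ]
  have hint : Integrable (fun x : Belief Ω => x.1 ω / p ω) lam := by
    refine integrable_of_bounded''
      (((continuous_apply ω).comp continuous_subtype_val).measurable.div_const
        _).aestronglyMeasurable (C := 1 / p ω) ?_
    intro x
    rw [abs_div, abs_of_nonneg (x.2.1 ω), abs_of_pos (hp ω)]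
    gcongr
    · exact le_of_lt (hp ω)
    · exact belief_coord_le_one x ω
  rw [← ofReal_integral_eq_lintegral_ofReal hint
    (Filter.Eventually.of_forall (fun x => div_nonneg (x.2.1 ω) (le_of_lt (hp ω))))]
  rw [integral_div, hbary ω, div_self (ne_of_gt (hp ω)), ENNReal.ofReal_one]

/-- Step A: from a public signal construct a feasible diagonal collection. -/
lemma stepA (p : Ω → ℝ) (hp : ∀ ω, 0 < p ω) (hpsum : ∑ ω : Ω, p ω = 1)
    (n : ℕ) (hn : 1 ≤ n)
    (v : Ω → (Fin n → Belief Ω) → ℝ) {C : ℝ} (hvb : ∀ ω x, |v ω x| ≤ C)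
    (hvm : ∀ ω, Measurable (v ω))
    (lam : Measure (Belief Ω)) (hlam : IsProbabilityMeasure lam)
    (hbary : ∀ ω : Ω, ∫ x : Belief Ω, x.1 ω ∂lam = p ω) :
    ∃ μ : Ω → Measure (Fin n → Belief Ω),
      Feasible p n μ ∧
      (∑ ω : Ω, p ω * ∫ x, v ω x ∂(μ ω))
        = ∫ x : Belief Ω, (∑ ω : Ω, x.1 ω * v ω (fun _ => x)) ∂lam ∧
      (∀ ω : Ω, μ ω ({q : Fin n → Belief Ω | ∃ x : Belief Ω, q = fun _ => x}ᶜ) = 0) ∧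
      (∑ ω : Ω, ENNReal.ofReal (p ω) • μ ω)
        = lam.map (fun x : Belief Ω => (fun _ : Fin n => x)) := by
  haveI := hlam
  classical
  set diagB : Belief Ω → (Fin n → Belief Ω) := fun x _ => x with hdiagB
  have hdiagm : Measurable diagB := measurable_pi_lambda _ (fun _ => measurable_id)
  set lamd : Ω → Measure (Belief Ω) :=
    fun ω => lam.withDensity (fun x => ENNReal.ofReal (x.1 ω / p ω)) with hlamd
  set μ : Ω → Measure (Fin n → Belief Ω) := fun ω => (lamd ω).map diagB with hμdef
  have hρm : ∀ ω : Ω, Measurable (fun x : Belief Ω => ENNReal.ofReal (x.1 ω / p ω)) :=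
    fun ω => (((continuous_apply ω).comp continuous_subtype_val).measurable.div_const
      _).ennreal_ofReal
  have hprob_lamd : ∀ ω, IsProbabilityMeasure (lamd ω) :=
    fun ω => lamd_isProbability p hp lam hbary ω
  have hprob_μ : ∀ ω, IsProbabilityMeasure (μ ω) := by
    intro ω
    haveI := hprob_lamd ω
    exact Measure.isProbabilityMeasure_map hdiagm.aemeasurable
  -- generic integral computation over μ ω
  have hIμ : ∀ (ω : Ω) (i : Fin n) (F : Belief Ω → ℝ), Measurable F →
      ∫ x, F (x i) ∂(μ ω) = ∫ b, F b ∂(lamd ω) := by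
    intro ω i F hF
    rw [hμdef]
    exact integral_map hdiagm.aemeasurable
      (hF.comp (measurable_pi_apply i)).aestronglyMeasurable
  -- the value identity
  have hvalue : (∑ ω : Ω, p ω * ∫ x, v ω x ∂(μ ω))
      = ∫ x : Belief Ω, (∑ ω : Ω, x.1 ω * v ω (fun _ => x)) ∂lam := by
    have h1 : ∀ ω : Ω, p ω * ∫ x, v ω x ∂(μ ω) = ∫ b, b.1 ω * v ω (fun _ => b) ∂lam := by
      intro ω
      have h2 : ∫ x, v ω x ∂(μ ω) = ∫ b, v ω (fun _ => b) ∂(lamd ω) := by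
        rw [hμdef]
        rw [integral_map hdiagm.aemeasurable (hvm ω).aestronglyMeasurable]
      rw [h2, hlamd]
      exact integral_withDensity_belief p hp lam ω ((hvm ω).comp hdiagm)
    rw [Finset.sum_congr rfl (fun ω _ => h1 ω)]
    rw [← integral_finset_sum]
    intro ω _
    refine integrable_of_bounded''
      ((((continuous_apply ω).comp continuous_subtype_val).measurable).mul
        ((hvm ω).comp hdiagm)).aestronglyMeasurable (C := C) ?_
    intro x
    rw [abs_mul]
    calc |x.1 ω| * |v ω (fun _ => x)| ≤ 1 * C :=
          mul_le_mul (belief_coord_abs_le_one x ω) (hvb ω _) (abs_nonneg _) zero_le_one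
      _ = C := one_mul C
  -- diagonal support
  have hdiagsupp : ∀ ω : Ω,
      μ ω ({q : Fin n → Belief Ω | ∃ x : Belief Ω, q = fun _ => x}ᶜ) = 0 := by
    intro ω
    have hD : {q : Fin n → Belief Ω | ∃ x : Belief Ω, q = fun _ => x}
        = ⋂ i, {q : Fin n → Belief Ω | q i = q ⟨0, hn⟩} := by
      ext q
      constructor
      · rintro ⟨x, rfl⟩
        exact Set.mem_iInter.mpr (fun i => rfl)
      · intro h
        exact ⟨q ⟨0, hn⟩, funext (fun i => Set.mem_iInter.mp h i)⟩
    have hDmeas : MeasurableSet {q : Fin n → Belief Ω | ∃ x : Belief Ω, q = fun _ => x} := by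
      rw [hD]
      exact (isClosed_iInter (fun i =>
        isClosed_eq (continuous_apply i) (continuous_apply (⟨0, hn⟩ : Fin n)))).measurableSet
    rw [hμdef]
    rw [Measure.map_apply hdiagm hDmeas.compl]
    have : diagB ⁻¹' ({q : Fin n → Belief Ω | ∃ x : Belief Ω, q = fun _ => x}ᶜ) = ∅ := by
      ext b
      simp only [Set.mem_preimage, Set.mem_compl_iff, Set.mem_setOf_eq, Set.mem_empty_iff_false,
        iff_false, not_not]
      exact ⟨b, rfl⟩
    rw [this, measure_empty]
  -- the mixture identity
  have hmix1 : (∑ ω : Ω, ENNReal.ofReal (p ω) • lamd ω) = lam := by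
    have h1 : ∀ ω : Ω, ENNReal.ofReal (p ω) • lamd ω
        = lam.withDensity (fun x => ENNReal.ofReal (p ω) • ENNReal.ofReal (x.1 ω / p ω)) := by
      intro ω
      rw [hlamd]
      rw [← withDensity_smul _ (hρm ω)]
      rfl
    rw [Finset.sum_congr rfl (fun ω _ => h1 ω)]
    rw [← withDensity_finset_sum lam Finset.univ
      (fun ω x => ENNReal.ofReal (p ω) • ENNReal.ofReal (x.1 ω / p ω))
      (fun ω => (hρm ω).const_smul (ENNReal.ofReal (p ω)))]
    have h2 : (fun x : Belief Ω =>
        ∑ ω : Ω, ENNReal.ofReal (p ω) • ENNReal.ofReal (x.1 ω / p ω))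
        = (1 : Belief Ω → ℝ≥0∞) := by
      funext x
      have h3 : ∀ ω : Ω, ENNReal.ofReal (p ω) • ENNReal.ofReal (x.1 ω / p ω)
          = ENNReal.ofReal (x.1 ω) := by
        intro ω
        rw [smul_eq_mul, ← ENNReal.ofReal_mul (le_of_lt (hp ω))]
        congr 1
        rw [mul_comm, div_mul_cancel₀ _ (ne_of_gt (hp ω))]
      rw [Finset.sum_congr rfl (fun ω _ => h3 ω),
        ← ENNReal.ofReal_sum_of_nonneg (fun ω _ => x.2.1 ω), x.2.2, ENNReal.ofReal_one]
      rfl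
    rw [h2, withDensity_one]
  have hmix : (∑ ω : Ω, ENNReal.ofReal (p ω) • μ ω) = lam.map diagB := by
    rw [← hmix1]
    ext s hs
    rw [Measure.map_apply hdiagm hs, Measure.finset_sum_apply, Measure.finset_sum_apply]
    refine Finset.sum_congr rfl (fun ω _ => ?_)
    rw [Measure.smul_apply, Measure.smul_apply, hμdef]
    rw [Measure.map_apply hdiagm hs]
  -- feasibility
  have hfeas : Feasible p n μ := by
    refine ⟨hprob_μ, ?_⟩
    intro i ω'
    haveI hPprob : IsProbabilityMeasure (jointP p μ) :=
      jointP_isProbability p (fun ω => le_of_lt (hp ω)) hpsum μ hprob_μ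
    have hproj : Measurable (fun z : Ω × (Fin n → Belief Ω) => z.2 i) :=
      (measurable_pi_apply i).comp measurable_snd
    have hm : MeasurableSpace.comap (fun z : Ω × (Fin n → Belief Ω) => z.2 i) inferInstance
        ≤ (inferInstance : MeasurableSpace (Ω × (Fin n → Belief Ω))) := hproj.comap_le
    have hbm : Measurable (fun b : Belief Ω => b.1 ω') :=
      ((continuous_apply ω').comp continuous_subtype_val).measurable
    have hsetz : MeasurableSet {z : Ω × (Fin n → Belief Ω) | z.1 = ω'} := by
      have h : {z : Ω × (Fin n → Belief Ω) | z.1 = ω'} = Prod.fst ⁻¹' {ω'} := by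
        ext z; simp
      rw [h]
      exact measurable_fst (measurableSet_singleton ω')
    refine ae_eq_condExp_of_forall_setIntegral_eq hm ?_ ?_ ?_ ?_
    · exact integrable_of_bounded'' (measurable_const.indicator hsetz).aestronglyMeasurable
        (indicator_abs_le zero_le_one (fun _ => by norm_num))
    · intro s _ _
      exact (integrable_of_bounded'' (hbm.comp hproj).aestronglyMeasurable
        (fun z => belief_coord_abs_le_one (z.2 i) ω')).integrableOn
    · rintro s ⟨t, ht, rfl⟩ _
      have hpre : MeasurableSet ((fun z : Ω × (Fin n → Belief Ω) => z.2 i) ⁻¹' t) := hproj ht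
      rw [← integral_indicator hpre, ← integral_indicator hpre]
      set g1 : Belief Ω → ℝ := Set.indicator t (fun b => b.1 ω') with hg1
      set g2 : Belief Ω → ℝ := Set.indicator t (fun _ => (1:ℝ)) with hg2
      have hg1m : Measurable g1 := hbm.indicator ht
      have hg2m : Measurable g2 := measurable_const.indicator ht
      have hg1b : ∀ b, |g1 b| ≤ 1 :=
        indicator_abs_le zero_le_one (fun b => belief_coord_abs_le_one b ω')
      have hg2b : ∀ b, |g2 b| ≤ 1 :=
        indicator_abs_le zero_le_one (fun _ => by norm_num)
      -- LHS
      have hLf : ∀ (ω : Ω) (x : Fin n → Belief Ω),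
          Set.indicator ((fun z : Ω × (Fin n → Belief Ω) => z.2 i) ⁻¹' t)
            (fun z => (z.2 i).1 ω') (ω, x) = g1 (x i) := by
        intro ω x
        simp only [hg1]
        by_cases hxt : x i ∈ t
        · rw [Set.indicator_of_mem hxt,
            Set.indicator_of_mem (show (ω, x) ∈ _ from hxt)]
        · rw [Set.indicator_of_notMem hxt,
            Set.indicator_of_notMem (show (ω, x) ∉ _ from hxt)]
      have hLHS : ∫ z, Set.indicator ((fun z : Ω × (Fin n → Belief Ω) => z.2 i) ⁻¹' t)
          (fun z => (z.2 i).1 ω') z ∂(jointP p μ) = ∫ b, b.1 ω' * g2 b ∂lam := by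
        rw [integral_jointP p (fun ω => le_of_lt (hp ω)) μ hprob_μ
          ((show Measurable (fun z : Ω × (Fin n → Belief Ω) => (z.2 i).1 ω') from
            hbm.comp hproj).indicator hpre)
          (indicator_abs_le zero_le_one (fun z => belief_coord_abs_le_one (z.2 i) ω'))]
        have h1 : ∀ ω : Ω, p ω * ∫ x, Set.indicator
            ((fun z : Ω × (Fin n → Belief Ω) => z.2 i) ⁻¹' t)
            (fun z => (z.2 i).1 ω') (ω, x) ∂(μ ω) = ∫ b, b.1 ω * g1 b ∂lam := by
          intro ω
          have h2 : ∫ x, Set.indicator ((fun z : Ω × (Fin n → Belief Ω) => z.2 i) ⁻¹' t)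
              (fun z => (z.2 i).1 ω') (ω, x) ∂(μ ω) = ∫ b, g1 b ∂(lamd ω) := by
            rw [show (fun x : Fin n → Belief Ω => Set.indicator
                ((fun z : Ω × (Fin n → Belief Ω) => z.2 i) ⁻¹' t)
                (fun z => (z.2 i).1 ω') (ω, x)) = fun x => g1 (x i) from
              funext (fun x => hLf ω x)]
            exact hIμ ω i g1 hg1m
          rw [h2, hlamd]
          exact integral_withDensity_belief p hp lam ω hg1m
        rw [Finset.sum_congr rfl (fun ω _ => h1 ω)]
        rw [← integral_finset_sum]
        · congr 1
          funext b
          rw [← Finset.sum_mul, b.2.2, one_mul]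
          by_cases hbt : b ∈ t
          · rw [hg1, hg2, Set.indicator_of_mem hbt, Set.indicator_of_mem hbt, mul_one]
          · rw [hg1, hg2, Set.indicator_of_notMem hbt, Set.indicator_of_notMem hbt, mul_zero]
        · intro ω _
          refine integrable_of_bounded''
            ((((continuous_apply ω).comp continuous_subtype_val).measurable).mul
              hg1m).aestronglyMeasurable (C := 1) ?_
          intro b
          rw [abs_mul]
          calc |b.1 ω| * |g1 b| ≤ 1 * 1 :=
                mul_le_mul (belief_coord_abs_le_one b ω) (hg1b b) (abs_nonneg _) zero_le_one
            _ = 1 := one_mul 1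
      -- RHS
      have hRf : ∀ (ω : Ω) (x : Fin n → Belief Ω),
          Set.indicator ((fun z : Ω × (Fin n → Belief Ω) => z.2 i) ⁻¹' t)
            (Set.indicator {z : Ω × (Fin n → Belief Ω) | z.1 = ω'} (fun _ => (1:ℝ))) (ω, x)
          = (if ω = ω' then (1:ℝ) else 0) * g2 (x i) := by
        intro ω x
        simp only [hg2]
        by_cases hxt : x i ∈ t
        · rw [Set.indicator_of_mem (show (ω, x) ∈ _ from hxt)]
          rw [Set.indicator_of_mem hxt, mul_one]
          by_cases hωω : ω = ω'
          · rw [Set.indicator_of_mem (show (ω, x) ∈ {z : Ω × (Fin n → Belief Ω) | z.1 = ω'}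
              from hωω), if_pos hωω]
          · rw [Set.indicator_of_notMem (show (ω, x) ∉
              {z : Ω × (Fin n → Belief Ω) | z.1 = ω'} from hωω), if_neg hωω]
        · rw [Set.indicator_of_notMem (show (ω, x) ∉ _ from hxt)]
          rw [Set.indicator_of_notMem hxt, mul_zero]
      have hRHS : ∫ z, Set.indicator ((fun z : Ω × (Fin n → Belief Ω) => z.2 i) ⁻¹' t)
          (Set.indicator {z : Ω × (Fin n → Belief Ω) | z.1 = ω'} (fun _ => (1:ℝ))) z
          ∂(jointP p μ) = ∫ b, b.1 ω' * g2 b ∂lam := by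
        rw [integral_jointP p (fun ω => le_of_lt (hp ω)) μ hprob_μ
          ((measurable_const.indicator hsetz).indicator hpre)
          (indicator_abs_le zero_le_one
            (indicator_abs_le zero_le_one (fun _ => by norm_num)))]
        have h1 : ∀ ω : Ω, p ω * ∫ x, Set.indicator
            ((fun z : Ω × (Fin n → Belief Ω) => z.2 i) ⁻¹' t)
            (Set.indicator {z : Ω × (Fin n → Belief Ω) | z.1 = ω'} (fun _ => (1:ℝ)))
            (ω, x) ∂(μ ω)
            = if ω = ω' then ∫ b, b.1 ω' * g2 b ∂lam else 0 := by
          intro ω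
          have h2 : ∫ x, Set.indicator ((fun z : Ω × (Fin n → Belief Ω) => z.2 i) ⁻¹' t)
              (Set.indicator {z : Ω × (Fin n → Belief Ω) | z.1 = ω'} (fun _ => (1:ℝ)))
              (ω, x) ∂(μ ω)
              = (if ω = ω' then (1:ℝ) else 0) * ∫ b, g2 b ∂(lamd ω) := by
            rw [show (fun x : Fin n → Belief Ω => Set.indicator
                ((fun z : Ω × (Fin n → Belief Ω) => z.2 i) ⁻¹' t)
                (Set.indicator {z : Ω × (Fin n → Belief Ω) | z.1 = ω'} (fun _ => (1:ℝ)))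
                (ω, x)) = fun x => (if ω = ω' then (1:ℝ) else 0) * g2 (x i) from
              funext (fun x => hRf ω x)]
            rw [integral_const_mul]
            rw [hIμ ω i g2 hg2m]
          rw [h2]
          by_cases hωω : ω = ω'
          · subst hωω
            rw [if_pos rfl, if_pos rfl, one_mul]
            exact integral_withDensity_belief p hp lam ω hg2m
          · rw [if_neg hωω, if_neg hωω, zero_mul, mul_zero]
        rw [Finset.sum_congr rfl (fun ω _ => h1 ω)]
        rw [Finset.sum_ite_eq' Finset.univ ω' (fun _ => ∫ b, b.1 ω' * g2 b ∂lam)]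
        simp
      rw [hLHS, hRHS]
    · exact StronglyMeasurable.aestronglyMeasurable
        (Measurable.stronglyMeasurable
          (hbm.comp (measurable_iff_comap_le.mpr le_rfl)))
  exact ⟨μ, hfeas, hvalue, hdiagsupp, hmix⟩

section StepB
variable {Ω : Type} [Fintype Ω] [Nonempty Ω] [MeasurableSpace Ω] [MeasurableSingletonClass Ω]

lemma stepB (p : Ω → ℝ) (hp : ∀ ω, 0 < p ω) (hpsum : ∑ ω : Ω, p ω = 1)
    (n : ℕ) (hn : 1 ≤ n)
    (v : Ω → (Fin n → Belief Ω) → ℝ) {C : ℝ} (hvb : ∀ ω x, |v ω x| ≤ C)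
    (hvm : ∀ ω, Measurable (v ω))
    (hpt : ∀ (ω : Ω) (x : Fin n → Belief Ω), (n:ℝ) * v ω x ≤ ∑ i, v ω (fun _ => x i))
    (M : ℝ)
    (hM : ∀ lam : Measure (Belief Ω), IsProbabilityMeasure lam →
      (∀ ω : Ω, ∫ x : Belief Ω, x.1 ω ∂lam = p ω) →
      ∫ x : Belief Ω, (∑ ω : Ω, x.1 ω * v ω (fun _ => x)) ∂lam ≤ M)
    (μ : Ω → Measure (Fin n → Belief Ω)) (hfeas : Feasible p n μ) :
    (∑ ω : Ω, p ω * ∫ x, v ω x ∂(μ ω)) ≤ M := by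
  classical
  obtain ⟨hprob, hcond⟩ := hfeas
  haveI := fun ω => hprob ω
  haveI hP : IsProbabilityMeasure (jointP p μ) :=
    jointP_isProbability p (fun ω => le_of_lt (hp ω)) hpsum μ hprob
  set h : Ω → Belief Ω → ℝ := fun ω' b => v ω' (fun _ => b) with hh
  have hdiagm : Measurable (fun b : Belief Ω => (fun _ : Fin n => b)) :=
    measurable_pi_lambda _ (fun _ => measurable_id)
  have hhm : ∀ ω', Measurable (h ω') := fun ω' => (hvm ω').comp hdiagm
  have hhb : ∀ ω' b, |h ω' b| ≤ C := fun ω' b => hvb ω' _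
  have hWm : Measurable (fun b : Belief Ω => ∑ ω : Ω, b.1 ω * h ω b) := by
    refine Finset.measurable_sum _ (fun ω _ => ?_)
    exact (((continuous_apply ω).comp continuous_subtype_val).measurable).mul (hhm ω)
  -- the per-receiver marginal and its properties
  have key : ∀ i : Fin n,
      (∑ ω : Ω, p ω * ∫ x, v ω (fun _ => x i) ∂(μ ω)) ≤ M := by
    intro i
    have hproj : Measurable (fun z : Ω × (Fin n → Belief Ω) => z.2 i) :=
      (measurable_pi_apply i).comp measurable_snd
    have hm : MeasurableSpace.comap (fun z : Ω × (Fin n → Belief Ω) => z.2 i) inferInstance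
        ≤ (inferInstance : MeasurableSpace (Ω × (Fin n → Belief Ω))) := hproj.comap_le
    have hprojm : Measurable[MeasurableSpace.comap
        (fun z : Ω × (Fin n → Belief Ω) => z.2 i) inferInstance]
        (fun z : Ω × (Fin n → Belief Ω) => z.2 i) := measurable_iff_comap_le.mpr le_rfl
    set lami : Measure (Belief Ω) := (jointP p μ).map (fun z => z.2 i) with hlami
    haveI hlamprob : IsProbabilityMeasure lami := Measure.isProbabilityMeasure_map hproj.aemeasurable
    -- indicator sets
    have hsetz : ∀ ω' : Ω, MeasurableSet {z : Ω × (Fin n → Belief Ω) | z.1 = ω'} := by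
      intro ω'
      have h : {z : Ω × (Fin n → Belief Ω) | z.1 = ω'} = Prod.fst ⁻¹' {ω'} := by
        ext z; simp
      rw [h]
      exact measurable_fst (measurableSet_singleton ω')
    -- barycenter of lami
    have hbary : ∀ ω' : Ω, ∫ b : Belief Ω, b.1 ω' ∂lami = p ω' := by
      intro ω'
      have hbm : Measurable (fun b : Belief Ω => b.1 ω') :=
        ((continuous_apply ω').comp continuous_subtype_val).measurable
      rw [hlami, integral_map hproj.aemeasurable hbm.aestronglyMeasurable]
      rw [integral_congr_ae (hcond i ω')]
      rw [integral_condExp hm]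
      rw [integral_indicator_const (1:ℝ) (hsetz ω')]
      rw [measureReal_def, jointP_fst_apply p μ hprob ω', smul_eq_mul, mul_one,
        ENNReal.toReal_ofReal (le_of_lt (hp ω'))]
    -- condexp pull-out: key identity per ω'
    have hterm : ∀ ω' : Ω,
        ∫ z, Set.indicator {z : Ω × (Fin n → Belief Ω) | z.1 = ω'} (fun _ => (1:ℝ)) z
          * h ω' (z.2 i) ∂(jointP p μ)
        = ∫ z, (z.2 i).1 ω' * h ω' (z.2 i) ∂(jointP p μ) := by
      intro ω'
      have hgsm : StronglyMeasurable[MeasurableSpace.comap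
          (fun z : Ω × (Fin n → Belief Ω) => z.2 i) inferInstance]
          (fun z : Ω × (Fin n → Belief Ω) => h ω' (z.2 i)) :=
        Measurable.stronglyMeasurable ((hhm ω').comp hprojm)
      have hind_int : Integrable (Set.indicator
          {z : Ω × (Fin n → Belief Ω) | z.1 = ω'} (fun _ => (1:ℝ))) (jointP p μ) :=
        integrable_of_bounded'' (measurable_const.indicator (hsetz ω')).aestronglyMeasurable
          (indicator_abs_le zero_le_one (fun _ => by norm_num))
      have hprod_int : Integrable ((fun z : Ω × (Fin n → Belief Ω) => h ω' (z.2 i))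
          * Set.indicator {z : Ω × (Fin n → Belief Ω) | z.1 = ω'} (fun _ => (1:ℝ)))
          (jointP p μ) := by
        refine integrable_of_bounded'' ?_ (C := |C|) ?_
        · exact (((hhm ω').comp hproj).mul
            (measurable_const.indicator (hsetz ω'))).aestronglyMeasurable
        · intro z
          rw [Pi.mul_apply, abs_mul]
          calc |h ω' (z.2 i)| * |Set.indicator _ (fun _ => (1:ℝ)) z| ≤ |C| * 1 := by
                refine mul_le_mul ((hhb ω' _).trans (le_abs_self C)) ?_ (abs_nonneg _)
                  (abs_nonneg _)
                exact indicator_abs_le zero_le_one (fun _ => by norm_num) z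
            _ = |C| := mul_one _
      have hce := condExp_mul_of_stronglyMeasurable_left hgsm hprod_int hind_int
      have e1 : ∫ z, Set.indicator {z : Ω × (Fin n → Belief Ω) | z.1 = ω'}
          (fun _ => (1:ℝ)) z * h ω' (z.2 i) ∂(jointP p μ)
          = ∫ z, ((fun z : Ω × (Fin n → Belief Ω) => h ω' (z.2 i))
            * Set.indicator {z : Ω × (Fin n → Belief Ω) | z.1 = ω'} (fun _ => (1:ℝ))) z
            ∂(jointP p μ) := by
        congr 1; funext z; rw [Pi.mul_apply, mul_comm]
      rw [e1, ← integral_condExp hm (f := (fun z : Ω × (Fin n → Belief Ω) => h ω' (z.2 i))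
        * Set.indicator {z : Ω × (Fin n → Belief Ω) | z.1 = ω'} (fun _ => (1:ℝ)))]
      rw [integral_congr_ae hce]
      have e2 : (fun z : Ω × (Fin n → Belief Ω) => h ω' (z.2 i))
          * ((jointP p μ)[Set.indicator {z : Ω × (Fin n → Belief Ω) | z.1 = ω'}
            (fun _ => (1:ℝ)) | MeasurableSpace.comap
            (fun z : Ω × (Fin n → Belief Ω) => z.2 i) inferInstance])
          =ᵐ[jointP p μ] fun z => (z.2 i).1 ω' * h ω' (z.2 i) := by
        filter_upwards [hcond i ω'] with z hz
        rw [Pi.mul_apply, ← hz, mul_comm]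
      rw [integral_congr_ae e2]
    -- express the sum as an integral over the marginal
    have hsum_eq : (∑ ω : Ω, p ω * ∫ x, v ω (fun _ => x i) ∂(μ ω))
        = ∫ b : Belief Ω, (∑ ω : Ω, b.1 ω * h ω b) ∂lami := by
      set F : Ω × (Fin n → Belief Ω) → ℝ := fun z => ∑ ω' : Ω,
        Set.indicator {zz : Ω × (Fin n → Belief Ω) | zz.1 = ω'} (fun _ => (1:ℝ)) z
          * h ω' (z.2 i) with hF
      have hFeval : ∀ (ω : Ω) (x : Fin n → Belief Ω), F (ω, x) = h ω (x i) := by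
        intro ω x
        simp only [hF]
        have h1 : ∀ ω' : Ω, Set.indicator {zz : Ω × (Fin n → Belief Ω) | zz.1 = ω'}
            (fun _ => (1:ℝ)) (ω, x) * h ω' (x i)
            = if ω = ω' then h ω' (x i) else 0 := by
          intro ω'
          by_cases hωω : ω = ω'
          · rw [Set.indicator_of_mem (show (ω, x) ∈ _ from hωω), one_mul, if_pos hωω]
          · rw [Set.indicator_of_notMem (show (ω, x) ∉
              {zz : Ω × (Fin n → Belief Ω) | zz.1 = ω'} from hωω), zero_mul,
              if_neg hωω]
        rw [Finset.sum_congr rfl (fun ω' _ => h1 ω')]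
        rw [Finset.sum_ite_eq Finset.univ ω (fun ω' => h ω' (x i))]
        rw [if_pos (Finset.mem_univ ω)]
      have hFm : Measurable F := by
        refine Finset.measurable_sum _ (fun ω' _ => ?_)
        exact (measurable_const.indicator (hsetz ω')).mul ((hhm ω').comp hproj)
      have hFb : ∀ z, |F z| ≤ |C| := by
        intro z
        have : F z = h z.1 (z.2 i) := hFeval z.1 z.2
        rw [this]
        exact (hhb _ _).trans (le_abs_self C)
      have h2 : (∑ ω : Ω, p ω * ∫ x, v ω (fun _ => x i) ∂(μ ω)) = ∫ z, F z ∂(jointP p μ) := by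
        rw [integral_jointP p (fun ω => le_of_lt (hp ω)) μ hprob hFm hFb]
        refine Finset.sum_congr rfl (fun ω _ => ?_)
        congr 1
        refine integral_congr_ae (Filter.Eventually.of_forall (fun x => ?_))
        exact (hFeval ω x).symm
      rw [h2, hF]
      rw [integral_finset_sum Finset.univ (f := fun (ω' : Ω)
          (z : Ω × (Fin n → Belief Ω)) =>
          Set.indicator {zz : Ω × (Fin n → Belief Ω) | zz.1 = ω'} (fun _ => (1:ℝ)) z
            * h ω' (z.2 i))
        (fun ω' _ => integrable_of_bounded''
        (((measurable_const.indicator (hsetz ω')).mul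
          ((hhm ω').comp hproj)).aestronglyMeasurable)
        (C := |C|) (fun z => by
          rw [abs_mul]
          calc |Set.indicator _ (fun _ => (1:ℝ)) z| * |h ω' (z.2 i)| ≤ 1 * |C| := by
                refine mul_le_mul (indicator_abs_le zero_le_one (fun _ => by norm_num) z)
                  ((hhb ω' _).trans (le_abs_self C)) (abs_nonneg _) zero_le_one
            _ = |C| := one_mul _))]
      rw [Finset.sum_congr rfl (fun ω' _ => hterm ω')]
      rw [hlami, integral_map hproj.aemeasurable hWm.aestronglyMeasurable]
      rw [← integral_finset_sum Finset.univ (f := fun (ω' : Ω)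
          (z : Ω × (Fin n → Belief Ω)) => (z.2 i).1 ω' * h ω' (z.2 i))
        (fun ω' _ => integrable_of_bounded''
        ((((continuous_apply ω').comp continuous_subtype_val).measurable.comp hproj).mul
          ((hhm ω').comp hproj)).aestronglyMeasurable
        (C := |C|) (fun z => by
          rw [abs_mul]
          calc |(z.2 i).1 ω'| * |h ω' (z.2 i)| ≤ 1 * |C| :=
                mul_le_mul (belief_coord_abs_le_one _ ω') ((hhb ω' _).trans (le_abs_self C))
                  (abs_nonneg _) zero_le_one
            _ = |C| := one_mul _))]
    rw [hsum_eq]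
    exact hM lami hlamprob hbary
  -- combine over receivers
  have hint1 : ∀ ω : Ω, Integrable (v ω) (μ ω) :=
    fun ω => integrable_of_bounded'' (hvm ω).aestronglyMeasurable (hvb ω)
  have hint2 : ∀ (ω : Ω) (i : Fin n), Integrable (fun x => v ω (fun _ => x i)) (μ ω) := by
    intro ω i
    refine integrable_of_bounded'' ((hvm ω).comp ?_).aestronglyMeasurable (fun x => hvb ω _)
    exact measurable_pi_lambda _ (fun _ => measurable_pi_apply i)
  have step1 : (n:ℝ) * (∑ ω : Ω, p ω * ∫ x, v ω x ∂(μ ω))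
      ≤ ∑ i : Fin n, ∑ ω : Ω, p ω * ∫ x, v ω (fun _ => x i) ∂(μ ω) := by
    rw [Finset.mul_sum]
    rw [Finset.sum_comm]
    refine Finset.sum_le_sum (fun ω _ => ?_)
    have h1 : (n:ℝ) * (p ω * ∫ x, v ω x ∂(μ ω)) = p ω * ((n:ℝ) * ∫ x, v ω x ∂(μ ω)) := by ring
    rw [h1]
    have h2 : (n:ℝ) * ∫ x, v ω x ∂(μ ω) ≤ ∑ i : Fin n, ∫ x, v ω (fun _ => x i) ∂(μ ω) := by
      rw [← integral_const_mul, ← integral_finset_sum Finset.univ (fun i _ => hint2 ω i)]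
      exact integral_mono ((hint1 ω).const_mul _)
        (integrable_finset_sum Finset.univ (fun i _ => hint2 ω i)) (hpt ω)
    calc p ω * ((n:ℝ) * ∫ x, v ω x ∂(μ ω))
        ≤ p ω * ∑ i : Fin n, ∫ x, v ω (fun _ => x i) ∂(μ ω) := by
          exact mul_le_mul_of_nonneg_left h2 (le_of_lt (hp ω))
      _ = ∑ i : Fin n, p ω * ∫ x, v ω (fun _ => x i) ∂(μ ω) := Finset.mul_sum _ _ _
  have step2 : ∑ i : Fin n, ∑ ω : Ω, p ω * ∫ x, v ω (fun _ => x i) ∂(μ ω) ≤ (n:ℝ) * M := by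
    calc ∑ i : Fin n, ∑ ω : Ω, p ω * ∫ x, v ω (fun _ => x i) ∂(μ ω)
        ≤ ∑ _i : Fin n, M := Finset.sum_le_sum (fun i _ => key i)
      _ = (n:ℝ) * M := by rw [Finset.sum_const, Finset.card_univ, Fintype.card_fin,
            nsmul_eq_mul]
  have hnpos : (0:ℝ) < n := by exact_mod_cast hn
  nlinarith [step1, step2]
end StepB

section Hypo
variable {Ω : Type} [Fintype Ω]

lemma hypo_closed {W : Belief Ω → ℝ} (hW : UpperSemicontinuous W) (C' : ℝ) :
    IsClosed {yt : (Ω → ℝ) × ℝ |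
      ∃ h : yt.1 ∈ stdSimplex ℝ Ω, -C' ≤ yt.2 ∧ yt.2 ≤ W ⟨yt.1, h⟩} := by
  refine IsSeqClosed.isClosed ?_
  intro f yt hmem hf
  have hf1 : Filter.Tendsto (fun k => (f k).1) Filter.atTop (nhds yt.1) :=
    (continuous_fst.continuousAt.tendsto).comp hf
  have hf2 : Filter.Tendsto (fun k => (f k).2) Filter.atTop (nhds yt.2) :=
    (continuous_snd.continuousAt.tendsto).comp hf
  have h1 : yt.1 ∈ stdSimplex ℝ Ω := by
    refine (isClosed_stdSimplex ℝ Ω).mem_of_tendsto hf1 ?_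
    filter_upwards with k
    exact (hmem k).choose
  have h2 : -C' ≤ yt.2 := by
    refine ge_of_tendsto hf2 ?_
    filter_upwards with k
    exact (hmem k).choose_spec.1
  refine ⟨h1, h2, ?_⟩
  by_contra hlt
  push_neg at hlt
  set b : Belief Ω := ⟨yt.1, h1⟩ with hb
  set c : ℝ := (W b + yt.2) / 2 with hc
  have hc1 : W b < c := by rw [hc]; linarith
  have hc2 : c < yt.2 := by rw [hc]; linarith
  -- the lifted sequence tends to b
  set bb : ℕ → Belief Ω := fun k => ⟨(f k).1, (hmem k).choose⟩ with hbb
  have hbbt : Filter.Tendsto bb Filter.atTop (nhds b) := by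
    rw [tendsto_subtype_rng]
    exact hf1
  have hev1 : ∀ᶠ k in Filter.atTop, W (bb k) < c := hbbt.eventually (hW b c hc1)
  have hev2 : ∀ᶠ k in Filter.atTop, c < (f k).2 := hf2.eventually_const_lt hc2
  obtain ⟨k, hk1, hk2⟩ := (hev1.and hev2).exists
  have := (hmem k).choose_spec.2
  exact absurd (lt_of_le_of_lt (this.trans (le_of_lt hk1)) hk2) (lt_irrefl _)
end Hypo

/-- agent-symmetric supermodular persuasion reduces to a single-receiver
problem (Lemma `lm_supermodular`): the value equals `sup_{λ ∈ Δ_p(Δ(Ω))} ∫ v̄ dλ`, and it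
is attained by a feasible collection supported on the diagonal coming from a distribution
`λ ∈ Δ_p(Δ(Ω))` supported on at most `|Ω|` points (a public signal). -/
theorem supermodular_persuasion_reduces_to_public
    {Ω : Type} [Fintype Ω] [Nonempty Ω] [MeasurableSpace Ω] [MeasurableSingletonClass Ω]
    (p : Ω → ℝ) (hp : ∀ ω, 0 < p ω) (hpsum : ∑ ω : Ω, p ω = 1)
    (n : ℕ) (hn : 1 ≤ n)
    (G : Ω → (Fin n → ℝ) → ℝ)
    (hGsuper : ∀ (ω : Ω) (z z' : Fin n → ℝ), G ω z + G ω z' ≤ G ω (z ⊔ z') + G ω (z ⊓ z'))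
    (hGsymm : ∀ (ω : Ω) (σ : Equiv.Perm (Fin n)) (z : Fin n → ℝ), G ω (z ∘ σ) = G ω z)
    (a : Ω → Belief Ω → ℝ)
    (v : Ω → (Fin n → Belief Ω) → ℝ)
    (hv : ∀ (ω : Ω) (x : Fin n → Belief Ω), v ω x = G ω (fun i => a ω (x i)))
    (hvb : ∃ C : ℝ, ∀ ω x, |v ω x| ≤ C)
    (hvusc : ∀ ω, UpperSemicontinuous (v ω)) :
    Val p n v =
      sSup { r : ℝ | ∃ lam : Measure (Belief Ω), IsProbabilityMeasure lam ∧
        (∀ ω : Ω, ∫ x : Belief Ω, x.1 ω ∂lam = p ω) ∧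
        r = ∫ x : Belief Ω, (∑ ω : Ω, x.1 ω * G ω (fun _ => a ω x)) ∂lam } ∧
    ∃ (μ : Ω → Measure (Fin n → Belief Ω)) (lam : Measure (Belief Ω))
      (s : Finset (Belief Ω)),
      Feasible p n μ ∧
      (∑ ω : Ω, p ω * ∫ x, v ω x ∂(μ ω)) = Val p n v ∧
      (∀ ω : Ω, μ ω ({q : Fin n → Belief Ω | ∃ x : Belief Ω, q = fun _ => x}ᶜ) = 0) ∧
      IsProbabilityMeasure lam ∧
      (∀ ω : Ω, ∫ x : Belief Ω, x.1 ω ∂lam = p ω) ∧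
      lam (↑s)ᶜ = 0 ∧ s.card ≤ Fintype.card Ω ∧
      (∑ ω : Ω, ENNReal.ofReal (p ω) • μ ω) =
        lam.map (fun x : Belief Ω => (fun _ : Fin n => x)) := by
  classical
  obtain ⟨C, hvb⟩ := hvb
  have hC0 : 0 ≤ C :=
    le_trans (abs_nonneg _) (hvb (Classical.arbitrary Ω)
      (fun _ => ⟨p, ⟨fun ω => le_of_lt (hp ω), hpsum⟩⟩))
  have hvm : ∀ ω, Measurable (v ω) := fun ω => usc_measurable (hvusc ω)
  -- the concavified objective W
  set W : Belief Ω → ℝ := fun x => ∑ ω : Ω, x.1 ω * v ω (fun _ => x) with hWdef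
  have hdiagc : Continuous (fun b : Belief Ω => (fun _ : Fin n => b)) :=
    continuous_pi (fun _ => continuous_id)
  have hWusc : UpperSemicontinuous W := by
    have h1 : ∀ ω : Ω, UpperSemicontinuous (fun b : Belief Ω => v ω (fun _ => b)) :=
      fun ω => usc_comp_continuous (hvusc ω) hdiagc
    have h2 : W = fun x : Belief Ω =>
        (∑ ω : Ω, x.1 ω * (v ω (fun _ => x) + C)) + (-C) := by
      funext x
      have h3 : ∑ ω : Ω, x.1 ω * (v ω (fun _ => x) + C)
          = (∑ ω : Ω, x.1 ω * v ω (fun _ => x)) + (∑ ω : Ω, x.1 ω) * C := by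
        rw [Finset.sum_mul, ← Finset.sum_add_distrib]
        refine Finset.sum_congr rfl (fun ω _ => by ring)
      rw [hWdef, h3, x.2.2, one_mul]
      ring
    rw [h2]
    refine UpperSemicontinuous.add ?_ upperSemicontinuous_const
    refine usc_finset_sum _ _ (fun ω _ => ?_)
    refine usc_mul_nonneg ((continuous_apply ω).comp continuous_subtype_val)
      ((h1 ω).add upperSemicontinuous_const) (fun x => x.2.1 ω) (fun x => ?_)
    have := abs_le.mp (hvb ω (fun _ => x))
    linarith [this.1]
  have hWm : Measurable W := usc_measurable hWusc
  have hWb : ∀ x, |W x| ≤ C := by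
    intro x
    rw [hWdef]
    calc |∑ ω : Ω, x.1 ω * v ω (fun _ => x)| ≤ ∑ ω : Ω, |x.1 ω * v ω (fun _ => x)| :=
          Finset.abs_sum_le_sum_abs _ _
      _ ≤ ∑ ω : Ω, x.1 ω * C := by
          refine Finset.sum_le_sum (fun ω _ => ?_)
          rw [abs_mul, abs_of_nonneg (x.2.1 ω)]
          exact mul_le_mul_of_nonneg_left (hvb ω _) (x.2.1 ω)
      _ = C := by rw [← Finset.sum_mul, x.2.2, one_mul]
  -- the pointwise supermodularity consequence
  have hpt : ∀ (ω : Ω) (x : Fin n → Belief Ω),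
      (n:ℝ) * v ω x ≤ ∑ i, v ω (fun _ => x i) := by
    intro ω x
    have h1 := supermod_diag hn (G ω) (hGsuper ω) (hGsymm ω) (fun i => a ω (x i))
    rw [hv ω x]
    refine le_trans h1 (le_of_eq ?_)
    refine Finset.sum_congr rfl (fun i _ => ?_)
    rw [hv]
  -- the compact convex hull of the hypograph
  set Hset : Set ((Ω → ℝ) × ℝ) := {yt : (Ω → ℝ) × ℝ |
    ∃ h : yt.1 ∈ stdSimplex ℝ Ω, -(C+1) ≤ yt.2 ∧ yt.2 ≤ W ⟨yt.1, h⟩} with hHdef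
  have hHclosed : IsClosed Hset := hypo_closed hWusc (C+1)
  have hHcompact : IsCompact Hset := by
    refine IsCompact.of_isClosed_subset
      ((isCompact_stdSimplex ℝ Ω).prod (isCompact_Icc (a := -(C+1)) (b := C))) hHclosed ?_
    rintro ⟨y, t⟩ ⟨hy, ht1, ht2⟩
    refine Set.mem_prod.mpr ⟨hy, Set.mem_Icc.mpr ⟨ht1, ?_⟩⟩
    exact le_trans ht2 (le_trans (le_abs_self _) (hWb _))
  set K : Set ((Ω → ℝ) × ℝ) := convexHull ℝ Hset with hKdef
  have hKcompact : IsCompact K := isCompact_convexHull' hHcompact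
  have hKconvex : Convex ℝ K := convex_convexHull ℝ Hset
  have hKclosed : IsClosed K := hKcompact.isClosed
  have hΦH : ∀ x : Belief Ω, ((x.1 : Ω → ℝ), W x) ∈ Hset := by
    intro x
    refine ⟨x.2, ?_, le_refl _⟩
    have := abs_le.mp (hWb x)
    linarith [this.1]
  -- key barycenter property
  have hkey : ∀ lam : Measure (Belief Ω), IsProbabilityMeasure lam →
      (∀ ω : Ω, ∫ x : Belief Ω, x.1 ω ∂lam = p ω) →
      ((p : Ω → ℝ), ∫ x, W x ∂lam) ∈ K := by
    intro lam hprob hbary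
    haveI := hprob
    set Φ : Belief Ω → (Ω → ℝ) × ℝ := fun x => ((x.1 : Ω → ℝ), W x) with hΦdef
    have hΦm : AEStronglyMeasurable Φ lam :=
      (continuous_subtype_val.measurable.prodMk hWm).aestronglyMeasurable
    have hΦint : Integrable Φ lam := by
      refine ⟨hΦm, HasFiniteIntegral.of_bounded (C := max 1 C)
        (Filter.Eventually.of_forall (fun x => ?_))⟩
      rw [Prod.norm_def]
      refine max_le_max ?_ ?_
      · rw [pi_norm_le_iff_of_nonneg zero_le_one]
        intro ω
        rw [Real.norm_eq_abs]
        exact belief_coord_abs_le_one x ω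
      · rw [Real.norm_eq_abs]
        exact hWb x
    have h1 : (∫ x, Φ x ∂lam) ∈ K :=
      hKconvex.integral_mem hKclosed
        (Filter.Eventually.of_forall (fun x => subset_convexHull ℝ Hset (hΦH x))) hΦint
    have h2 : (∫ x, Φ x ∂lam).2 = ∫ x, W x ∂lam := by
      have := (ContinuousLinearMap.snd ℝ (Ω → ℝ) ℝ).integral_comp_comm hΦint
      exact this.symm
    have h3 : (∫ x, Φ x ∂lam).1 = (p : Ω → ℝ) := by
      funext ω
      have h4 := ((ContinuousLinearMap.proj (R := ℝ) (φ := fun _ : Ω => ℝ) ω).comp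
        (ContinuousLinearMap.fst ℝ (Ω → ℝ) ℝ)).integral_comp_comm hΦint
      have h5 : ((ContinuousLinearMap.proj (R := ℝ) (φ := fun _ : Ω => ℝ) ω).comp
          (ContinuousLinearMap.fst ℝ (Ω → ℝ) ℝ)) (∫ x, Φ x ∂lam) = (∫ x, Φ x ∂lam).1 ω := rfl
      rw [← h5, ← h4]
      exact hbary ω
    have : ((p : Ω → ℝ), ∫ x, W x ∂lam) = ∫ x, Φ x ∂lam := by
      rw [Prod.ext_iff]
      exact ⟨h3.symm, h2.symm⟩
    rw [this]
    exact h1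
  -- the maximum over the fiber at p
  set Mset : Set ℝ := {t : ℝ | ((p : Ω → ℝ), t) ∈ K} with hMsetdef
  have hMsetclosed : IsClosed Mset :=
    hKclosed.preimage (continuous_const.prodMk continuous_id)
  have hMsetbdd : BddAbove Mset := by
    refine BddAbove.mono (fun t ht => ?_) (hKcompact.image continuous_snd).bddAbove
    exact ⟨((p : Ω → ℝ), t), ht, rfl⟩
  set pbel : Belief Ω := ⟨p, ⟨fun ω => le_of_lt (hp ω), hpsum⟩⟩ with hpbel
  have hMsetne : Mset.Nonempty := ⟨W pbel, subset_convexHull ℝ Hset (hΦH pbel)⟩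
  set M : ℝ := sSup Mset with hMdef
  have hMmem : ((p : Ω → ℝ), M) ∈ K := hMsetclosed.csSup_mem hMsetne hMsetbdd
  have hMub : ∀ t ∈ Mset, t ≤ M := fun t ht => le_csSup hMsetbdd ht
  -- decompose (p, M) as a finite convex combination of hypograph points
  rw [hKdef, convexHull_eq] at hMmem
  obtain ⟨ι, tf, wq, zf, hw0, hw1, hzH, hcm⟩ := hMmem
  rw [Finset.centerMass_eq_of_sum_1 _ _ hw1] at hcm
  set bel : ι → Belief Ω := fun j =>
    if hj : j ∈ tf then ⟨(zf j).1, (hzH j hj).choose⟩ else pbel with hbel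
  have hbel1 : ∀ j ∈ tf, ((bel j).1 : Ω → ℝ) = (zf j).1 := by
    intro j hj
    simp only [hbel, dif_pos hj]
  have hbel2 : ∀ j ∈ tf, (zf j).2 ≤ W (bel j) := by
    intro j hj
    have h := (hzH j hj).choose_spec.2
    have : bel j = ⟨(zf j).1, (hzH j hj).choose⟩ := by simp only [hbel, dif_pos hj]
    rw [this]
    exact h
  have hfst : ∀ ω : Ω, ∑ j ∈ tf, wq j * ((bel j).1 : Ω → ℝ) ω = p ω := by
    intro ω
    have h1 := congrArg Prod.fst hcm
    rw [Prod.fst_sum] at h1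
    have h2 : (∑ j ∈ tf, (wq j • zf j).1) ω = p ω := congrFun h1 ω
    rw [Finset.sum_apply] at h2
    rw [← h2]
    refine Finset.sum_congr rfl (fun j hj => ?_)
    rw [Prod.smul_fst, Pi.smul_apply, smul_eq_mul, hbel1 j hj]
  have hsnd : ∑ j ∈ tf, wq j * (zf j).2 = M := by
    have h1 := congrArg Prod.snd hcm
    rw [Prod.snd_sum] at h1
    have h2 : (∑ j ∈ tf, (wq j • zf j).2) = M := h1
    rw [← h2]
    refine Finset.sum_congr rfl (fun j hj => ?_)
    rw [Prod.smul_snd, smul_eq_mul]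
  have hMle : M ≤ ∑ j ∈ tf, wq j * W (bel j) := by
    rw [← hsnd]
    exact Finset.sum_le_sum (fun j hj =>
      mul_le_mul_of_nonneg_left (hbel2 j hj) (hw0 j hj))
  -- merge repeated points
  set s0 : Finset (Belief Ω) := tf.image bel with hs0
  set q0 : Belief Ω → ℝ := fun b => ∑ j ∈ tf.filter (fun j => bel j = b), wq j with hq0
  have htransfer : ∀ g : Belief Ω → ℝ,
      ∑ b ∈ s0, q0 b * g b = ∑ j ∈ tf, wq j * g (bel j) := by
    intro g
    rw [← Finset.sum_fiberwise_of_maps_to (fun j hj => Finset.mem_image_of_mem bel hj)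
      (fun j => wq j * g (bel j))]
    refine Finset.sum_congr rfl (fun b _ => ?_)
    rw [hq0, Finset.sum_mul]
    refine Finset.sum_congr rfl (fun j hj => ?_)
    rw [(Finset.mem_filter.mp hj).2]
  have hq00 : ∀ b ∈ s0, 0 ≤ q0 b := by
    intro b _
    exact Finset.sum_nonneg (fun j hj => hw0 j (Finset.mem_filter.mp hj).1)
  have hq01 : ∑ b ∈ s0, q0 b = 1 := by
    have := htransfer (fun _ => 1)
    simpa [hw1] using this
  have hq0b : ∀ ω : Ω, ∑ b ∈ s0, q0 b * (b.1 : Ω → ℝ) ω = p ω := by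
    intro ω
    rw [htransfer (fun b => (b.1 : Ω → ℝ) ω)]
    exact hfst ω
  have hq0W : M ≤ ∑ b ∈ s0, q0 b * W b := by
    rw [htransfer W]
    exact hMle
  -- Caratheodory reduction
  obtain ⟨s', q', hq'0, hq'1, hq'b, hs'card, hq'W⟩ :=
    caratheodory_weights W p s0.card s0 q0 le_rfl hq00 hq01 hq0b
  have hMW : M ≤ ∑ b ∈ s', q' b * W b := le_trans hq0W hq'W
  -- the optimal public signal
  set lamstar : Measure (Belief Ω) := ∑ b ∈ s', ENNReal.ofReal (q' b) • Measure.dirac b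
    with hlamstar
  have hstarprob : IsProbabilityMeasure lamstar := by
    constructor
    rw [hlamstar, Measure.finset_sum_apply]
    have h1 : ∀ b ∈ s', (ENNReal.ofReal (q' b) • Measure.dirac b) Set.univ
        = ENNReal.ofReal (q' b) := by
      intro b _
      rw [Measure.smul_apply, measure_univ, smul_eq_mul, mul_one]
    rw [Finset.sum_congr rfl h1, ← ENNReal.ofReal_sum_of_nonneg hq'0, hq'1,
      ENNReal.ofReal_one]
  have hIstar : ∀ g : Belief Ω → ℝ, Measurable g → (∀ x, |g x| ≤ max 1 C) →
      ∫ b, g b ∂lamstar = ∑ b ∈ s', q' b * g b := by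
    intro g hg hgb
    rw [hlamstar, integral_finset_sum_measure (fun b _ => Integrable.smul_measure
      (integrable_of_bounded'' hg.aestronglyMeasurable hgb) ENNReal.ofReal_ne_top)]
    refine Finset.sum_congr rfl (fun b hb => ?_)
    rw [integral_smul_measure, ENNReal.toReal_ofReal (hq'0 b hb), integral_dirac,
      smul_eq_mul]
  have hstarbary : ∀ ω : Ω, ∫ x : Belief Ω, x.1 ω ∂lamstar = p ω := by
    intro ω
    rw [hIstar (fun x => x.1 ω)
      (((continuous_apply ω).comp continuous_subtype_val).measurable)
      (fun x => le_trans (belief_coord_abs_le_one x ω) (le_max_left 1 C))]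
    exact hq'b ω
  have hstarW : ∫ x, W x ∂lamstar = M := by
    have h1 : ∫ x, W x ∂lamstar = ∑ b ∈ s', q' b * W b :=
      hIstar W hWm (fun x => le_trans (hWb x) (le_max_right 1 C))
    have h2 : ∫ x, W x ∂lamstar ≤ M := hMub _ (hkey lamstar hstarprob hstarbary)
    rw [h1] at h2 ⊢
    exact le_antisymm h2 hMW
  have hstarcompl : lamstar ((s' : Set (Belief Ω)))ᶜ = 0 := by
    rw [hlamstar, Measure.finset_sum_apply]
    refine Finset.sum_eq_zero (fun b hb => ?_)
    rw [Measure.smul_apply, Measure.dirac_apply' _ (s'.finite_toSet.measurableSet.compl)]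
    rw [Set.indicator_of_notMem (by simpa using hb)]
    simp
  -- step A applied to lamstar
  obtain ⟨μstar, hfeasstar, hvalstar, hdiagstar, hmixstar⟩ :=
    stepA p hp hpsum n hn v hvb hvm lamstar hstarprob hstarbary
  have hvalM : (∑ ω : Ω, p ω * ∫ x, v ω x ∂(μstar ω)) = M := by
    rw [hvalstar]
    exact hstarW
  -- the upper bound for arbitrary feasible collections
  have hub : ∀ (μ : Ω → Measure (Fin n → Belief Ω)), Feasible p n μ →
      (∑ ω : Ω, p ω * ∫ x, v ω x ∂(μ ω)) ≤ M := by
    intro μ hfeas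
    refine stepB p hp hpsum n hn v hvb hvm hpt M (fun lam hprob hbary => ?_) μ hfeas
    exact hMub _ (hkey lam hprob hbary)
  -- Val = M
  have hValM : Val p n v = M := by
    rw [Val]
    refine IsGreatest.csSup_eq ⟨⟨μstar, hfeasstar, hvalM.symm⟩, ?_⟩
    rintro r ⟨μ, hfeas, rfl⟩
    exact hub μ hfeas
  -- the RHS sup equals M
  have hGint : ∀ lam : Measure (Belief Ω),
      (∫ x : Belief Ω, (∑ ω : Ω, x.1 ω * G ω (fun _ => a ω x)) ∂lam) = ∫ x, W x ∂lam := by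
    intro lam
    refine integral_congr_ae (Filter.Eventually.of_forall (fun x => ?_))
    rw [hWdef]
    refine Finset.sum_congr rfl (fun ω _ => ?_)
    rw [hv]
  have hRsup : sSup { r : ℝ | ∃ lam : Measure (Belief Ω), IsProbabilityMeasure lam ∧
      (∀ ω : Ω, ∫ x : Belief Ω, x.1 ω ∂lam = p ω) ∧
      r = ∫ x : Belief Ω, (∑ ω : Ω, x.1 ω * G ω (fun _ => a ω x)) ∂lam } = M := by
    refine IsGreatest.csSup_eq ⟨⟨lamstar, hstarprob, hstarbary, ?_⟩, ?_⟩
    · rw [hGint lamstar, hstarW]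
    · rintro r ⟨lam, hprob, hbary, rfl⟩
      rw [hGint lam]
      exact hMub _ (hkey lam hprob hbary)
  refine ⟨by rw [hValM, hRsup], μstar, lamstar, s', hfeasstar, ?_, hdiagstar, hstarprob,
    hstarbary, hstarcompl, hs'card, hmixstar⟩
  rw [hvalM, hValM]
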